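/- In the simplicial setup, suppose that for every equivalence class Γ_i of B_A, the associated monomial ideal Ĩ_i = (y^{(b−h_i)/α} : b ∈ Γ_i) ⊂ T (where h_i is the componentwise minimum of Γ_i) is either the unit ideal T or is generated by monomials of degree 1. Then every monomial in N₁ ∪ N₂ has total degree at most r(K[B]) + 1; in particular, the initial ideal in_≺(ker π) is generated by monomials of degree at most r(K[B]) + 1. -/

import Mathlib

namespace SimplicialToric

/-- `eVec d α i` is `α` times the `i`-th standard basis vector of `ℕ^d`. -/
def eVec (d α : ℕ) (i : Fin d) : Fin d → ℕ := fun j => if j = i then α else 0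

/-- The Hilbert basis of a submonoid `B ⊆ ℕ^d`: the set of irreducible elements
(in `ℕ^d` the only unit is `0`). -/
def Hilb {d : ℕ} (B : AddSubmonoid (Fin d → ℕ)) : Set (Fin d → ℕ) :=
  {b | b ∈ B ∧ b ≠ 0 ∧ ∀ x ∈ B, ∀ y ∈ B, b = x + y → x = 0 ∨ y = 0}

/-- The submonoid `A = Σᵢ ℤ≥0·eᵢ = αℤ≥0^d`. -/
def Amon (d α : ℕ) : AddSubmonoid (Fin d → ℕ) :=
  AddSubmonoid.closure (Set.range (eVec d α))

/-- `B_A = {x ∈ B : x − a ∉ B for every a ∈ A \ {0}}`. -/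
def BA {d : ℕ} (B : AddSubmonoid (Fin d → ℕ)) (α : ℕ) : Set (Fin d → ℕ) :=
  {x | x ∈ B ∧ ∀ z ∈ Amon d α, z ≠ 0 → ∀ y ∈ B, x ≠ y + z}

/-- The generators `a₁,…,a_c,e₁,…,e_d` of `B`, indexed by the variables of
`S = K[x₁,…,x_c,y₁,…,y_d]`; variable `Fin.castAdd d i` is `xᵢ`, variable
`Fin.natAdd c j` is `yⱼ`. -/
def gens (c d α : ℕ) (a : Fin c → Fin d → ℕ) : Fin (c + d) → Fin d → ℕ :=
  Fin.addCases a (eVec d α)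

/-- The element of `B` represented by the monomial with exponent vector `σ`:
`π(x^μ y^ν) = t^(valE σ)`. -/
def valE (c d α : ℕ) (a : Fin c → Fin d → ℕ) (σ : Fin (c + d) →₀ ℕ) : Fin d → ℕ :=
  ∑ v : Fin (c + d), σ v • gens c d α a v

/-- total degree of a monomial (exponent vector). -/
def degE {N : ℕ} (σ : Fin N →₀ ℕ) : ℕ := ∑ v, σ v

/-- the graded reverse lexicographic order: `grevlex σ τ` means `σ ≺ τ`,
i.e. `deg σ < deg τ`, or degrees agree and the last nonzero entry of `τ − σ`
is negative. -/
def grevlex {N : ℕ} (σ τ : Fin N →₀ ℕ) : Prop :=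
  degE σ < degE τ ∨ (degE σ = degE τ ∧ ∃ k, τ k < σ k ∧ ∀ l, k < l → σ l = τ l)

/-- `x ∼ y` iff `x − y ∈ gp(A) = αℤ^d`. -/
def Rel {d : ℕ} (α : ℕ) (x y : Fin d → ℕ) : Prop :=
  ∀ j, (α : ℤ) ∣ (x j : ℤ) - (y j : ℤ)

/-- `Γ` is an equivalence class of `B_A` modulo `αℤ^d`. -/
def IsClass {d : ℕ} (B : AddSubmonoid (Fin d → ℕ)) (α : ℕ) (Γ : Set (Fin d → ℕ)) : Prop :=
  ∃ x ∈ BA B α, Γ = {y | y ∈ BA B α ∧ Rel α x y}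

/-- the total order on an equivalence class of `B_A`: `b ≺ c` iff the last
nonzero entry of `b − c` is negative. -/
def ltCls {d : ℕ} (x y : Fin d → ℕ) : Prop :=
  ∃ k, x k < y k ∧ ∀ l, k < l → x l = y l

/-- `joinSub x y = x∨y − y`, where `x∨y` is the componentwise maximum. -/
def joinSub {d : ℕ} (x y : Fin d → ℕ) : Fin d → ℕ := fun j => max (x j) (y j) - y j

/-- the monomial with exponents `σ` lies in `T = K[y₁,…,y_d]`. -/
def yOnly (c d : ℕ) (σ : Fin (c + d) →₀ ℕ) : Prop := ∀ i : Fin c, σ (Fin.castAdd d i) = 0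

/-- the monomial with exponents `σ` involves only the `x`-variables. -/
def xOnly (c d : ℕ) (σ : Fin (c + d) →₀ ℕ) : Prop := ∀ j : Fin d, σ (Fin.natAdd c j) = 0

/-- the set `N₁`, for a given choice `m` of the minimal monomials `m_b`. -/
def N1set (c d α : ℕ) (a : Fin c → Fin d → ℕ) (B : AddSubmonoid (Fin d → ℕ))
    (m : (Fin d → ℕ) → (Fin (c + d) →₀ ℕ)) : Set (Fin (c + d) →₀ ℕ) :=
  {n | ∃ (i : Fin c) (b : Fin d → ℕ), b ∈ BA B α ∧
    n = Finsupp.single (Fin.castAdd d i) 1 + m b ∧ n ≠ m (a i + b)}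

/-- the set `N₂ = ∪_Γ N_Γ`, where `N_Γ = {n(bᵢ,bⱼ) = m_{bⱼ}·m_{bᵢ∨bⱼ−bⱼ} : bᵢ ≺ bⱼ in Γ}`. -/
def N2set {d : ℕ} (c α : ℕ) (B : AddSubmonoid (Fin d → ℕ))
    (m : (Fin d → ℕ) → (Fin (c + d) →₀ ℕ)) : Set (Fin (c + d) →₀ ℕ) :=
  {n | ∃ Γ, IsClass B α Γ ∧ ∃ bi ∈ Γ, ∃ bj ∈ Γ, ltCls bi bj ∧ n = m bj + m (joinSub bi bj)}

/-- `σ` is the exponent vector of the initial (i.e. `≺`-largest) term of `f`. -/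
def IsLeadMon {N : ℕ} {K : Type*} [Field K] (f : MvPolynomial (Fin N) K)
    (σ : Fin N →₀ ℕ) : Prop :=
  σ ∈ f.support ∧ ∀ τ ∈ f.support, τ = σ ∨ grevlex τ σ

/-- the initial ideal of `I` with respect to the graded reverse lexicographic order. -/
noncomputable def initialIdeal {N : ℕ} {K : Type*} [Field K] (I : Ideal (MvPolynomial (Fin N) K)) :
    Ideal (MvPolynomial (Fin N) K) :=
  Ideal.span {g | ∃ f ∈ I, ∃ σ, IsLeadMon f σ ∧ g = MvPolynomial.monomial σ (1 : K)}

end SimplicialToric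

open SimplicialToric

/-!
A monomial `σ` lies outside `in_≺(ker π)` exactly when it is standard, `σ = m_{val σ}`, and
standard monomials are closed under division; so `in_≺(ker π)` is generated by the minimal
non-standard monomials, and it suffices to bound their degree by `r + 1`.

Write a minimal non-standard `σ = μ ν` with `μ` in the `x`'s and `ν` in the `y`'s. Pure
`y`-monomials are standard, and a standard `x`-monomial has its value in `B_A` (otherwise its
minimal representative would contain some `y_k`), hence degree `≤ r`. If `ν = 1`, `σ` is such a
monomial times one `x_i`. Otherwise write `m_{val σ} = μ' ν'`: the values of `μ` and `μ'` are
distinct `∼`-equivalent elements of `B_A`, so by hypothesis they are `h + e_q` and `h + e_p` with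
`p ≠ q`, and `ν y_q = ν' y_p`. Grevlex minimality of `m_{val σ}` forces `p < q`, while `μ y_p`, of
value `val μ' + e_q`, is non-standard since for `w ∈ B` the monomial `m_{w + e_q}` contains some
`y_k` with `k ≥ q`. So `σ = μ y_p`. For `N₂` the same description of the classes gives `b_i ∨ b_j − b_j = e_p`.
-/

namespace SimplicialToric

section Monomial

variable {N : ℕ}

lemma degE_eq_degree (σ : Fin N →₀ ℕ) : degE σ = σ.degree :=
  (Finsupp.degree_eq_sum σ).symm

lemma degE_add (σ τ : Fin N →₀ ℕ) : degE (σ + τ) = degE σ + degE τ := by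
  simp only [degE_eq_degree, map_add]

lemma degE_single (v : Fin N) (n : ℕ) : degE (Finsupp.single v n) = n := by
  rw [degE_eq_degree, Finsupp.degree_single]

lemma grevlex_asymm {σ τ : Fin N →₀ ℕ} (h : grevlex σ τ) : ¬ grevlex τ σ := by
  rintro (h' | ⟨e', k', hk', hl'⟩) <;> rcases h with h | ⟨e, k, hk, hl⟩
  · omega
  · omega
  · omega
  · rcases lt_trichotomy k k' with hkk | rfl | hkk
    · exact absurd (hl k' hkk) (by omega)
    · omega
    · exact absurd (hl' k hkk) (by omega)

lemma grevlex_add_left (ρ : Fin N →₀ ℕ) {σ τ : Fin N →₀ ℕ} (h : grevlex σ τ) :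
    grevlex (ρ + σ) (ρ + τ) := by
  simp only [grevlex, degE_add, Finsupp.add_apply] at h ⊢
  rcases h with h | ⟨e, k, hk, hl⟩
  · omega
  · exact Or.inr ⟨by omega, k, by omega, fun l hkl => by rw [hl l hkl]⟩

end Monomial

section Valuation

variable {c d α : ℕ} {a : Fin c → Fin d → ℕ}

local notation "val" => valE c d α a

lemma gens_castAdd (i : Fin c) : gens c d α a (Fin.castAdd d i) = a i := Fin.addCases_left i

lemma gens_natAdd (j : Fin d) : gens c d α a (Fin.natAdd c j) = eVec d α j := Fin.addCases_right j

lemma valE_apply (σ : Fin (c + d) →₀ ℕ) (j : Fin d) :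
    val σ j = (∑ i, σ (Fin.castAdd d i) * a i j) + α * σ (Fin.natAdd c j) := by
  simp [valE, Finset.sum_apply, Fin.sum_univ_add, gens_castAdd, gens_natAdd, eVec, mul_comm]

lemma valE_add (σ τ : Fin (c + d) →₀ ℕ) : val (σ + τ) = val σ + val τ := by
  simp [valE, add_smul, Finset.sum_add_distrib]

lemma valE_single (v : Fin (c + d)) (n : ℕ) :
    val (Finsupp.single v n) = n • gens c d α a v := by
  simp [valE, Finsupp.single_apply]

lemma valE_single_natAdd (k : Fin d) : val (Finsupp.single (Fin.natAdd c k) 1) = eVec d α k := by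
  rw [valE_single, gens_natAdd, one_smul]

lemma sum_valE (hdeg : ∀ i, ∑ j, a i j = α) (σ : Fin (c + d) →₀ ℕ) :
    ∑ j, val σ j = α * degE σ := by
  have hgens : ∀ v, ∑ j, gens c d α a v j = α :=
    Fin.addCases (fun i => by rw [gens_castAdd, hdeg]) (fun l => by simp [gens_natAdd, eVec])
  calc ∑ j, val σ j = ∑ v, σ v * ∑ j, gens c d α a v j := by
        simp only [valE, Finset.sum_apply, Pi.smul_apply, smul_eq_mul, Finset.mul_sum]
        exact Finset.sum_comm
    _ = α * degE σ := by simp only [hgens, degE, Finset.mul_sum, mul_comm]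

lemma degE_eq_of_valE_eq (hα : 0 < α) (hdeg : ∀ i, ∑ j, a i j = α) {σ τ : Fin (c + d) →₀ ℕ}
    (h : val σ = val τ) : degE σ = degE τ :=
  Nat.eq_of_mul_eq_mul_left hα (by rw [← sum_valE hdeg, ← sum_valE hdeg, h])

lemma valE_apply_of_yOnly {ν : Fin (c + d) →₀ ℕ} (hν : yOnly c d ν) (j : Fin d) :
    val ν j = α * ν (Fin.natAdd c j) := by
  simp [valE_apply, show ∀ i, ν (Fin.castAdd d i) = 0 from hν]

lemma eq_of_yOnly_of_valE_eq (hα : 0 < α) {ν ν' : Fin (c + d) →₀ ℕ} (hν : yOnly c d ν)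
    (hν' : yOnly c d ν') (h : val ν = val ν') : ν = ν' := by
  ext v
  refine Fin.addCases (fun i => ?_) (fun j => ?_) v
  · rw [hν i, hν' i]
  · have := congrFun h j
    rw [valE_apply_of_yOnly hν, valE_apply_of_yOnly hν'] at this
    exact Nat.eq_of_mul_eq_mul_left hα this

lemma exists_xOnly_add_yOnly (σ : Fin (c + d) →₀ ℕ) :
    ∃ μ ν, xOnly c d μ ∧ yOnly c d ν ∧ μ + ν = σ :=
  ⟨σ.filter (fun v => (v : ℕ) < c), σ.filter (fun v => ¬ (v : ℕ) < c),
    fun _ => Finsupp.filter_apply_neg _ _ (by simp),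
    fun _ => Finsupp.filter_apply_neg _ _ (by simp), Finsupp.filter_add_filter_not σ _⟩

end Valuation

section Generators

variable {c d α : ℕ} {a : Fin c → Fin d → ℕ} {B : AddSubmonoid (Fin d → ℕ)}

local notation "val" => valE c d α a

lemma gens_mem (hBgen : B = AddSubmonoid.closure (Set.range a ∪ Set.range (eVec d α)))
    (v : Fin (c + d)) : gens c d α a v ∈ B := by
  subst hBgen
  refine AddSubmonoid.subset_closure (Fin.addCases (fun i => ?_) (fun j => ?_) v)
  · exact Or.inl ⟨i, (gens_castAdd i).symm⟩
  · exact Or.inr ⟨j, (gens_natAdd j).symm⟩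

lemma valE_mem (hBgen : B = AddSubmonoid.closure (Set.range a ∪ Set.range (eVec d α)))
    (σ : Fin (c + d) →₀ ℕ) : val σ ∈ B :=
  AddSubmonoid.sum_mem _ fun v _ => AddSubmonoid.nsmul_mem B (gens_mem hBgen v) _

lemma exists_valE_eq_add_eVec
    (hBgen : B = AddSubmonoid.closure (Set.range a ∪ Set.range (eVec d α)))
    {σ : Fin (c + d) →₀ ℕ} {l : Fin d} (h : σ (Fin.natAdd c l) ≠ 0) :
    ∃ y ∈ B, val σ = y + eVec d α l := by
  refine ⟨val (σ - Finsupp.single (Fin.natAdd c l) 1), valE_mem hBgen _, ?_⟩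
  rw [← valE_single_natAdd, ← valE_add,
    tsub_add_cancel_of_le (Finsupp.single_le_iff.mpr (Nat.one_le_iff_ne_zero.mpr h))]

lemma Amon_le (hBgen : B = AddSubmonoid.closure (Set.range a ∪ Set.range (eVec d α))) :
    Amon d α ≤ B :=
  hBgen ▸ AddSubmonoid.closure_mono Set.subset_union_right

end Generators

section Apery

variable {d α : ℕ} {B : AddSubmonoid (Fin d → ℕ)}

lemma mul_mem_Amon (n : Fin d → ℕ) : (fun j => α * n j) ∈ Amon d α := by
  have : (fun j => α * n j) = ∑ k, n k • eVec d α k := by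
    funext j
    simp [Finset.sum_apply, eVec, mul_comm]
  rw [this]
  exact AddSubmonoid.sum_mem _ fun k _ =>
    AddSubmonoid.nsmul_mem _ (AddSubmonoid.subset_closure (Set.mem_range_self k)) _

lemma eq_zero_or_exists_eq_add_eVec {z : Fin d → ℕ} (hz : z ∈ Amon d α) :
    z = 0 ∨ ∃ k, ∃ z' ∈ Amon d α, z = z' + eVec d α k := by
  induction hz using AddSubmonoid.closure_induction with
  | mem _ hx =>
    obtain ⟨k, rfl⟩ := hx
    exact Or.inr ⟨k, 0, zero_mem _, (zero_add _).symm⟩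
  | zero => exact Or.inl rfl
  | add x y _ hy ihx _ =>
    rcases ihx with rfl | ⟨k, x', hx', rfl⟩
    · rwa [zero_add]
    · exact Or.inr ⟨k, x' + y, add_mem hx' hy, add_right_comm _ _ _⟩

lemma exists_eq_add_eVec_of_not_mem_BA (hA : Amon d α ≤ B)
    {b : Fin d → ℕ} (hb : b ∈ B) (h : b ∉ BA B α) : ∃ k, ∃ y ∈ B, b = y + eVec d α k := by
  simp only [BA, Set.mem_ofPred_eq, hb, true_and, not_forall, not_not] at h
  obtain ⟨z, hz, hz0, y, hy, rfl⟩ := h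
  rcases eq_zero_or_exists_eq_add_eVec hz with rfl | ⟨k, z', hz', rfl⟩
  · exact absurd rfl hz0
  · exact ⟨k, y + z', add_mem hy (hA hz'), (add_assoc _ _ _).symm⟩

lemma Rel.symm {x y : Fin d → ℕ} (h : Rel α x y) : Rel α y x :=
  fun j => by simpa using (h j).neg_right

lemma Rel.trans {x y z : Fin d → ℕ} (hxy : Rel α x y) (hyz : Rel α y z) : Rel α x z :=
  fun j => by simpa using dvd_add (hxy j) (hyz j)

lemma eq_of_le_of_rel {u w : Fin d → ℕ} (hu : u ∈ BA B α) (hw : w ∈ B) (hle : w ≤ u)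
    (hrel : Rel α u w) : u = w := by
  by_contra hne
  have hdvd : ∀ j, α ∣ u j - w j := fun j => by
    have := hrel j
    rwa [← Nat.cast_sub (hle j), Int.natCast_dvd_natCast] at this
  have hz : u - w ∈ Amon d α := by
    convert mul_mem_Amon (α := α) fun j => (u j - w j) / α
    exact (Nat.mul_div_cancel' (hdvd _)).symm
  refine hu.2 (u - w) hz (fun h0 => hne ?_) w hw (add_tsub_cancel_of_le hle).symm
  exact le_antisymm (tsub_eq_zero_iff_le.mp h0) hle

end Apery

section Classes

variable {d α : ℕ} {B : AddSubmonoid (Fin d → ℕ)}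

/-- For `Ĩ_Γ = (y^{(b - h)/α} : b ∈ Γ)`, `h ∈ Γ` says `1 ∈ Ĩ_Γ`, and `b = h + e_k` says that the
generator of `Ĩ_Γ` coming from `b` is the variable `y_k`. -/
def ClassIdealsUnitOrLinear (B : AddSubmonoid (Fin d → ℕ)) (α : ℕ) : Prop :=
  ∀ Γ, IsClass B α Γ → ∀ h : Fin d → ℕ,
    (∀ j, IsLeast {v | ∃ b ∈ Γ, v = b j} (h j)) →
    (h ∈ Γ ∨ ∀ b ∈ Γ, ∃ k : Fin d, b = fun j => h j + eVec d α k j)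

lemma ClassIdealsUnitOrLinear.exists_eq_add_eVec (hdec : ClassIdealsUnitOrLinear B α)
    {u w : Fin d → ℕ} (hu : u ∈ BA B α) (hw : w ∈ BA B α) (hrel : Rel α u w) (hne : u ≠ w) :
    ∃ h p q, p ≠ q ∧ u = h + eVec d α p ∧ w = h + eVec d α q := by
  set Γ := {y | y ∈ BA B α ∧ Rel α u y}
  have huΓ : u ∈ Γ := ⟨hu, fun j => by simp⟩
  have hwΓ : w ∈ Γ := ⟨hw, hrel⟩
  have hleast : ∀ j, IsLeast {v | ∃ b ∈ Γ, v = b j} (sInf {v | ∃ b ∈ Γ, v = b j}) :=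
    fun j => ⟨Nat.sInf_mem ⟨u j, u, huΓ, rfl⟩, fun _ hv => Nat.sInf_le hv⟩
  set h : Fin d → ℕ := fun j => sInf {v | ∃ b ∈ Γ, v = b j}
  have hle : ∀ b ∈ Γ, h ≤ b := fun b hb j => (hleast j).2 ⟨b, hb, rfl⟩
  rcases hdec Γ ⟨u, hu, rfl⟩ h hleast with ⟨hhBA, hh⟩ | hlin
  · have hu' := eq_of_le_of_rel hu hhBA.1 (hle u huΓ) hh
    have hw' := eq_of_le_of_rel hw hhBA.1 (hle w hwΓ) (hrel.symm.trans hh)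
    exact absurd (hu'.trans hw'.symm) hne
  · obtain ⟨p, hp⟩ := hlin u huΓ
    obtain ⟨q, hq⟩ := hlin w hwΓ
    exact ⟨h, p, q, fun hpq => hne (by rw [hp, hq, hpq]), hp, hq⟩

lemma joinSub_add_eVec (h : Fin d → ℕ) {p q : Fin d} (hpq : p ≠ q) :
    joinSub (h + eVec d α p) (h + eVec d α q) = eVec d α p := by
  funext j
  by_cases hjp : j = p
  · subst hjp
    simp [joinSub, eVec, hpq]
  · by_cases hjq : j = q
    · subst hjq
      simp [joinSub, eVec, hjp]
    · simp [joinSub, eVec, hjp, hjq]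

end Classes

section MinimalRepresentatives

variable {c d α : ℕ} {a : Fin c → Fin d → ℕ} {B : AddSubmonoid (Fin d → ℕ)}
  {m : (Fin d → ℕ) → (Fin (c + d) →₀ ℕ)}

local notation "val" => valE c d α a

lemma castAdd_lt_natAdd (i : Fin c) (j : Fin d) : Fin.castAdd d i < Fin.natAdd c j := by
  simp only [Fin.lt_def, Fin.val_castAdd, Fin.val_natAdd]
  omega

lemma exists_eq_natAdd_of_natAdd_lt {k : Fin d} {v : Fin (c + d)} (h : Fin.natAdd c k < v) :
    ∃ l, v = Fin.natAdd c l ∧ k < l := by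
  induction v using Fin.addCases with
  | left i => exact absurd h (castAdd_lt_natAdd i k).not_gt
  | right l => exact ⟨l, rfl, (Fin.natAdd_lt_natAdd_iff c).mp h⟩

lemma minRep_of_add (hBgen : B = AddSubmonoid.closure (Set.range a ∪ Set.range (eVec d α)))
    (hmval : ∀ b ∈ B, val (m b) = b)
    (hmmin : ∀ b ∈ B, ∀ σ, val σ = b → m b = σ ∨ grevlex (m b) σ)
    {ρ τ : Fin (c + d) →₀ ℕ} (h : m (val (ρ + τ)) = ρ + τ) : m (val τ) = τ := by
  rcases hmmin _ (valE_mem hBgen τ) τ rfl with hτ | hlt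
  · exact hτ
  have hrep : val (ρ + m (val τ)) = val (ρ + τ) := by
    rw [valE_add, valE_add, hmval _ (valE_mem hBgen τ)]
  rcases hmmin _ (valE_mem hBgen _) _ hrep with heq | hlt'
  · exact (add_left_cancel (h.symm.trans heq)).symm
  · rw [h] at hlt'
    exact absurd (grevlex_add_left ρ hlt) (grevlex_asymm hlt')

lemma apply_le_minRep_of_eq_above (hα : 0 < α) (hdeg : ∀ i, ∑ j, a i j = α)
    (hBgen : B = AddSubmonoid.closure (Set.range a ∪ Set.range (eVec d α)))
    (hmval : ∀ b ∈ B, val (m b) = b)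
    (hmmin : ∀ b ∈ B, ∀ σ, val σ = b → m b = σ ∨ grevlex (m b) σ)
    {ρ : Fin (c + d) →₀ ℕ} {k : Fin (c + d)} (habove : ∀ l, k < l → ρ l = m (val ρ) l) :
    ρ k ≤ m (val ρ) k := by
  by_contra! hk
  have hb := valE_mem hBgen ρ
  rcases hmmin _ hb ρ rfl with heq | hlt
  · rw [heq] at hk
    exact lt_irrefl _ hk
  · exact grevlex_asymm hlt
      (Or.inr ⟨(degE_eq_of_valE_eq hα hdeg (hmval _ hb)).symm, k, hk, habove⟩)

lemma minRep_of_yOnly (hα : 0 < α) (hdeg : ∀ i, ∑ j, a i j = α)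
    (hBgen : B = AddSubmonoid.closure (Set.range a ∪ Set.range (eVec d α)))
    (hmval : ∀ b ∈ B, val (m b) = b)
    (hmmin : ∀ b ∈ B, ∀ σ, val σ = b → m b = σ ∨ grevlex (m b) σ)
    {ν : Fin (c + d) →₀ ℕ} (hν : yOnly c d ν) : m (val ν) = ν := by
  have hb := valE_mem hBgen ν
  rcases hmmin _ hb ν rfl with heq | hlt
  · exact heq
  have hyle : ∀ j, m (val ν) (Fin.natAdd c j) ≤ ν (Fin.natAdd c j) := fun j => by
    have := congrFun (hmval _ hb) j
    rw [valE_apply, valE_apply_of_yOnly hν] at this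
    exact Nat.le_of_mul_le_mul_left (by omega) hα
  rcases hlt with hlt | ⟨hdegE, k, hk, habove⟩
  · exact absurd (degE_eq_of_valE_eq hα hdeg (hmval _ hb)) hlt.ne
  induction k using Fin.addCases with
  | right j => exact absurd (hyle j) (not_le.mpr hk)
  | left i =>
    have hdegμ : degE (m (val ν)) =
        ∑ i', m (val ν) (Fin.castAdd d i') + ∑ j, m (val ν) (Fin.natAdd c j) :=
      Fin.sum_univ_add _
    have hdegν : degE ν = ∑ i', ν (Fin.castAdd d i') + ∑ j, ν (Fin.natAdd c j) :=
      Fin.sum_univ_add _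
    have hy : ∑ j, m (val ν) (Fin.natAdd c j) = ∑ j, ν (Fin.natAdd c j) :=
      Finset.sum_congr rfl fun j _ => habove _ (castAdd_lt_natAdd i j)
    simp only [show ∀ i', ν (Fin.castAdd d i') = 0 from hν, Finset.sum_const_zero] at hdegν hk
    have hx := Finset.sum_eq_zero_iff.mp (by omega : ∑ i', m (val ν) (Fin.castAdd d i') = 0) i
      (Finset.mem_univ i)
    omega

lemma exists_le_minRep_natAdd_ne_zero (hα : 0 < α) (hdeg : ∀ i, ∑ j, a i j = α)
    (hBgen : B = AddSubmonoid.closure (Set.range a ∪ Set.range (eVec d α)))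
    (hmval : ∀ b ∈ B, val (m b) = b)
    (hmmin : ∀ b ∈ B, ∀ σ, val σ = b → m b = σ ∨ grevlex (m b) σ)
    {y : Fin d → ℕ} (hy : y ∈ B) (k : Fin d) :
    ∃ k', k ≤ k' ∧ m (y + eVec d α k) (Fin.natAdd c k') ≠ 0 := by
  classical
  set b := y + eVec d α k
  set L := Finset.univ.filter fun l => ∃ y' ∈ B, b = y' + eVec d α l
  have hkL : k ∈ L := Finset.mem_filter.mpr ⟨Finset.mem_univ k, y, hy, rfl⟩
  set k' := L.max' ⟨k, hkL⟩
  obtain ⟨y', hy', hb'⟩ := (Finset.mem_filter.mp (L.max'_mem ⟨k, hkL⟩)).2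
  have hvanish : ∀ ρ, val ρ = b → ∀ l, k' < l → ρ (Fin.natAdd c l) = 0 := by
    intro ρ hρ l hl
    by_contra h0
    obtain ⟨y'', hy'', he⟩ := exists_valE_eq_add_eVec hBgen h0
    exact (L.le_max' l (Finset.mem_filter.mpr ⟨Finset.mem_univ l, y'', hy'', hρ ▸ he⟩)).not_gt hl
  set τ := m y' + Finsupp.single (Fin.natAdd c k') 1
  have hτ : val τ = b := by rw [valE_add, hmval y' hy', valE_single_natAdd, hb']
  have hbB : b ∈ B := hτ ▸ valE_mem hBgen τ
  refine ⟨k', L.le_max' k hkL, fun h0 => ?_⟩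
  have hle := apply_le_minRep_of_eq_above hα hdeg hBgen hmval hmmin (ρ := τ)
    (k := Fin.natAdd c k') fun v hv => by
      obtain ⟨l, rfl, hl⟩ := exists_eq_natAdd_of_natAdd_lt hv
      rw [hvanish τ hτ l hl, hτ, hvanish _ (hmval b hbB) l hl]
  rw [hτ, h0] at hle
  simp [τ] at hle

lemma mem_BA_of_minRep_of_xOnly (hα : 0 < α) (hdeg : ∀ i, ∑ j, a i j = α)
    (hBgen : B = AddSubmonoid.closure (Set.range a ∪ Set.range (eVec d α)))
    (hmval : ∀ b ∈ B, val (m b) = b)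
    (hmmin : ∀ b ∈ B, ∀ σ, val σ = b → m b = σ ∨ grevlex (m b) σ)
    {μ : Fin (c + d) →₀ ℕ} (hμ : xOnly c d μ) (hstd : m (val μ) = μ) : val μ ∈ BA B α := by
  by_contra h
  obtain ⟨k, y, hy, hb⟩ := exists_eq_add_eVec_of_not_mem_BA (Amon_le hBgen) (valE_mem hBgen μ) h
  obtain ⟨k', -, hk'⟩ := exists_le_minRep_natAdd_ne_zero hα hdeg hBgen hmval hmmin hy k
  rw [← hb, hstd] at hk'
  exact hk' (hμ k')

lemma degE_minRep_le (hdeg : ∀ i, ∑ j, a i j = α) (hmval : ∀ b ∈ B, val (m b) = b) {r : ℕ}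
    (hr : IsGreatest {k | ∃ b ∈ BA B α, ∑ j, b j = α * k} r) {b : Fin d → ℕ}
    (hb : b ∈ BA B α) : degE (m b) ≤ r :=
  hr.2 ⟨b, hb, by rw [← sum_valE hdeg, hmval b hb.1]⟩

lemma degE_minRep_eVec (hα : 0 < α) (hdeg : ∀ i, ∑ j, a i j = α)
    (hBgen : B = AddSubmonoid.closure (Set.range a ∪ Set.range (eVec d α)))
    (hmval : ∀ b ∈ B, val (m b) = b) (k : Fin d) : degE (m (eVec d α k)) = 1 := by
  have hk : eVec d α k ∈ B := hBgen ▸ AddSubmonoid.subset_closure (Or.inr ⟨k, rfl⟩)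
  have := sum_valE hdeg (m (eVec d α k))
  rw [hmval _ hk] at this
  simp only [eVec, Finset.sum_ite_eq', Finset.mem_univ, if_true] at this
  exact Nat.eq_of_mul_eq_mul_left hα (this.symm.trans (mul_one α).symm)

end MinimalRepresentatives

section DegreeBounds

variable {c d α : ℕ} {a : Fin c → Fin d → ℕ} {B : AddSubmonoid (Fin d → ℕ)}
  {m : (Fin d → ℕ) → (Fin (c + d) →₀ ℕ)}

local notation "val" => valE c d α a

lemma degE_le_of_mem_N1set (hdeg : ∀ i, ∑ j, a i j = α) (hmval : ∀ b ∈ B, val (m b) = b)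
    {r : ℕ} (hr : IsGreatest {k | ∃ b ∈ BA B α, ∑ j, b j = α * k} r)
    {n : Fin (c + d) →₀ ℕ} (hn : n ∈ N1set c d α a B m) : degE n ≤ r + 1 := by
  obtain ⟨i, b, hb, rfl, -⟩ := hn
  rw [degE_add, degE_single, add_comm]
  exact Nat.add_le_add_right (degE_minRep_le hdeg hmval hr hb) 1

lemma degE_le_of_mem_N2set (hα : 0 < α) (hdeg : ∀ i, ∑ j, a i j = α)
    (hBgen : B = AddSubmonoid.closure (Set.range a ∪ Set.range (eVec d α)))
    (hmval : ∀ b ∈ B, val (m b) = b) {r : ℕ}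
    (hr : IsGreatest {k | ∃ b ∈ BA B α, ∑ j, b j = α * k} r)
    (hdec : ClassIdealsUnitOrLinear B α) {n : Fin (c + d) →₀ ℕ} (hn : n ∈ N2set c α B m) :
    degE n ≤ r + 1 := by
  obtain ⟨Γ, ⟨x, -, rfl⟩, bi, ⟨hbi, hxi⟩, bj, ⟨hbj, hxj⟩, hlt, rfl⟩ := hn
  have hne : bi ≠ bj := by
    rintro rfl
    obtain ⟨k, hk, -⟩ := hlt
    exact lt_irrefl _ hk
  obtain ⟨h, p, q, hpq, rfl, rfl⟩ := hdec.exists_eq_add_eVec hbi hbj (hxi.symm.trans hxj) hne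
  rw [degE_add, joinSub_add_eVec h hpq, degE_minRep_eVec hα hdeg hBgen hmval]
  exact Nat.add_le_add_right (degE_minRep_le hdeg hmval hr hbj) 1

end DegreeBounds

section MinimalNonstandard

variable {c d α : ℕ} {a : Fin c → Fin d → ℕ} {B : AddSubmonoid (Fin d → ℕ)}
  {m : (Fin d → ℕ) → (Fin (c + d) →₀ ℕ)}

local notation "val" => valE c d α a

lemma exists_valE_add_eVec_eq_of_not_minRep (hα : 0 < α) (hdeg : ∀ i, ∑ j, a i j = α)
    (hBgen : B = AddSubmonoid.closure (Set.range a ∪ Set.range (eVec d α)))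
    (hmval : ∀ b ∈ B, val (m b) = b)
    (hmmin : ∀ b ∈ B, ∀ σ, val σ = b → m b = σ ∨ grevlex (m b) σ)
    (hdec : ClassIdealsUnitOrLinear B α) {μ ν μ' ν' : Fin (c + d) →₀ ℕ} (hμ : xOnly c d μ)
    (hμstd : m (val μ) = μ) (hν : yOnly c d ν) (hσ : m (val (μ + ν)) ≠ μ + ν)
    (hμ' : xOnly c d μ') (hν' : yOnly c d ν') (hsplit : μ' + ν' = m (val (μ + ν))) :
    ∃ p q, p ≠ q ∧ val μ + eVec d α p = val μ' + eVec d α q := by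
  have hb : val (μ + ν) ∈ B := valE_mem hBgen _
  have hμ'std : m (val μ') = μ' :=
    minRep_of_add hBgen hmval hmmin (ρ := ν') (by rw [add_comm ν' μ', hsplit, hmval _ hb])
  have hval : val μ + val ν = val μ' + val ν' := by
    rw [← valE_add, ← valE_add, hsplit, hmval _ hb]
  have hrel : Rel α (val μ) (val μ') := fun j =>
    ⟨(ν' (Fin.natAdd c j) : ℤ) - ν (Fin.natAdd c j), by
      have := congrArg (Nat.cast (R := ℤ)) (congrFun hval j)
      push_cast [Pi.add_apply, valE_apply_of_yOnly hν, valE_apply_of_yOnly hν'] at this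
      linear_combination this⟩
  have hne : val μ ≠ val μ' := fun heq => hσ <| by
    have hνν' : ν = ν' := eq_of_yOnly_of_valE_eq hα hν hν' (add_left_cancel (heq ▸ hval))
    rw [← hsplit, ← hμ'std, ← heq, hμstd, hνν']
  obtain ⟨h, q, p, hqp, hμq, hμ'p⟩ := hdec.exists_eq_add_eVec
    (mem_BA_of_minRep_of_xOnly hα hdeg hBgen hmval hmmin hμ hμstd)
    (mem_BA_of_minRep_of_xOnly hα hdeg hBgen hmval hmmin hμ' hμ'std) hrel hne
  exact ⟨p, q, hqp.symm, by rw [hμq, hμ'p, add_right_comm]⟩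

lemma not_minRep_add_single (hα : 0 < α) (hdeg : ∀ i, ∑ j, a i j = α)
    (hBgen : B = AddSubmonoid.closure (Set.range a ∪ Set.range (eVec d α)))
    (hmval : ∀ b ∈ B, val (m b) = b)
    (hmmin : ∀ b ∈ B, ∀ σ, val σ = b → m b = σ ∨ grevlex (m b) σ)
    {μ : Fin (c + d) →₀ ℕ} (hμ : xOnly c d μ) {w : Fin d → ℕ} (hw : w ∈ B) {p q : Fin d}
    (hpq : p < q) (hval : val (μ + Finsupp.single (Fin.natAdd c p) 1) = w + eVec d α q) :
    m (val (μ + Finsupp.single (Fin.natAdd c p) 1)) ≠ μ + Finsupp.single (Fin.natAdd c p) 1 := by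
  intro hstd
  obtain ⟨k, hqk, hk⟩ := exists_le_minRep_natAdd_ne_zero hα hdeg hBgen hmval hmmin hw q
  rw [← hval, hstd] at hk
  simp [hμ k, (hpq.trans_le hqk).ne] at hk

lemma exists_single_le_not_minRep (hα : 0 < α) (hdeg : ∀ i, ∑ j, a i j = α)
    (hBgen : B = AddSubmonoid.closure (Set.range a ∪ Set.range (eVec d α)))
    (hmval : ∀ b ∈ B, val (m b) = b)
    (hmmin : ∀ b ∈ B, ∀ σ, val σ = b → m b = σ ∨ grevlex (m b) σ)
    (hdec : ClassIdealsUnitOrLinear B α) {μ ν : Fin (c + d) →₀ ℕ} (hμ : xOnly c d μ)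
    (hμstd : m (val μ) = μ) (hν : yOnly c d ν) (hσ : m (val (μ + ν)) ≠ μ + ν) :
    ∃ p, Finsupp.single (Fin.natAdd c p) 1 ≤ ν ∧
      m (val (μ + Finsupp.single (Fin.natAdd c p) 1)) ≠ μ + Finsupp.single (Fin.natAdd c p) 1 := by
  obtain ⟨μ', ν', hμ', hν', hsplit⟩ := exists_xOnly_add_yOnly (m (val (μ + ν)))
  obtain ⟨p, q, hpq, hμμ'⟩ :=
    exists_valE_add_eVec_eq_of_not_minRep hα hdeg hBgen hmval hmmin hdec hμ hμstd hν hσ hμ' hν'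
      hsplit
  have hval : val μ + val ν = val μ' + val ν' := by
    rw [← valE_add, ← valE_add, hsplit, hmval _ (valE_mem hBgen _)]
  -- `ν y_q = ν' y_p`, read off coordinatewise
  have hcoord : ∀ l,
      α * ν (Fin.natAdd c l) + eVec d α q l = α * ν' (Fin.natAdd c l) + eVec d α p l := fun l => by
    have h1 := congrFun hval l
    have h2 := congrFun hμμ' l
    simp only [Pi.add_apply, valE_apply_of_yOnly hν, valE_apply_of_yOnly hν'] at h1 h2
    omega
  have hνp : ν (Fin.natAdd c p) = ν' (Fin.natAdd c p) + 1 := by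
    have := hcoord p
    simp only [eVec, if_neg hpq, ↓reduceIte] at this
    exact Nat.eq_of_mul_eq_mul_left hα (by rw [mul_add, mul_one]; omega)
  have hνl : ∀ l, l ≠ p → l ≠ q → ν (Fin.natAdd c l) = ν' (Fin.natAdd c l) := fun l hlp hlq => by
    have := hcoord l
    simp only [eVec, if_neg hlp, if_neg hlq, add_zero] at this
    exact Nat.eq_of_mul_eq_mul_left hα this
  have hpq' : p < q := by
    refine lt_of_le_of_ne (not_lt.mp fun hqp => ?_) hpq
    have hle := apply_le_minRep_of_eq_above hα hdeg hBgen hmval hmmin (ρ := μ + ν)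
      (k := Fin.natAdd c p) fun v hv => by
        obtain ⟨l, rfl, hl⟩ := exists_eq_natAdd_of_natAdd_lt hv
        simp [← hsplit, hμ l, hμ' l, hνl l hl.ne' (hqp.trans hl).ne']
    simp only [← hsplit, Finsupp.add_apply, hμ p, hμ' p, zero_add] at hle
    omega
  refine ⟨p, Finsupp.single_le_iff.mpr (by omega),
    not_minRep_add_single hα hdeg hBgen hmval hmmin hμ (valE_mem hBgen μ') hpq' ?_⟩
  rw [valE_add, valE_single_natAdd, hμμ']

lemma exists_eq_minRep_add_single_of_minimal (hα : 0 < α) (hdeg : ∀ i, ∑ j, a i j = α)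
    (hBgen : B = AddSubmonoid.closure (Set.range a ∪ Set.range (eVec d α)))
    (hmval : ∀ b ∈ B, val (m b) = b)
    (hmmin : ∀ b ∈ B, ∀ σ, val σ = b → m b = σ ∨ grevlex (m b) σ)
    (hdec : ClassIdealsUnitOrLinear B α) {σ : Fin (c + d) →₀ ℕ} (hσ : m (val σ) ≠ σ)
    (hmin : ∀ τ < σ, m (val τ) = τ) :
    ∃ μ v, xOnly c d μ ∧ m (val μ) = μ ∧ σ = μ + Finsupp.single v 1 := by
  obtain ⟨μ, ν, hμ, hν, rfl⟩ := exists_xOnly_add_yOnly σ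
  rcases eq_or_ne μ 0 with rfl | hμ0
  · rw [zero_add] at hσ
    exact absurd (minRep_of_yOnly hα hdeg hBgen hmval hmmin hν) hσ
  rcases eq_or_ne ν 0 with rfl | hν0
  · obtain ⟨v, hv⟩ := Finsupp.ne_iff.mp hμ0
    have hτμ : μ - Finsupp.single v 1 + Finsupp.single v 1 = μ :=
      tsub_add_cancel_of_le (Finsupp.single_le_iff.mpr (Nat.one_le_iff_ne_zero.mpr hv))
    have hlt : μ - Finsupp.single v 1 < μ + 0 := by
      rw [add_zero]
      conv_rhs => rw [← hτμ]
      exact lt_add_of_pos_right _ (pos_iff_ne_zero.mpr (Finsupp.single_ne_zero.mpr one_ne_zero))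
    refine ⟨μ - Finsupp.single v 1, v, fun j => ?_, hmin _ hlt, by rw [add_zero, hτμ]⟩
    rw [Finsupp.tsub_apply, hμ j, zero_tsub]
  · have hμstd := hmin μ (lt_add_of_pos_right μ (pos_iff_ne_zero.mpr hν0))
    obtain ⟨p, hp, hpstd⟩ :=
      exists_single_le_not_minRep hα hdeg hBgen hmval hmmin hdec hμ hμstd hν hσ
    refine ⟨μ, Fin.natAdd c p, hμ, hμstd, by_contra fun hne => hpstd (hmin _ ?_)⟩
    exact lt_of_le_of_ne (add_le_add_right hp μ) (Ne.symm hne)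

lemma degE_le_of_minimal_not_minRep (hα : 0 < α) (hdeg : ∀ i, ∑ j, a i j = α)
    (hBgen : B = AddSubmonoid.closure (Set.range a ∪ Set.range (eVec d α)))
    (hmval : ∀ b ∈ B, val (m b) = b)
    (hmmin : ∀ b ∈ B, ∀ σ, val σ = b → m b = σ ∨ grevlex (m b) σ) {r : ℕ}
    (hr : IsGreatest {k | ∃ b ∈ BA B α, ∑ j, b j = α * k} r)
    (hdec : ClassIdealsUnitOrLinear B α) {σ : Fin (c + d) →₀ ℕ} (hσ : m (val σ) ≠ σ)
    (hmin : ∀ τ < σ, m (val τ) = τ) : degE σ ≤ r + 1 := by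
  obtain ⟨μ, v, hμ, hμstd, rfl⟩ :=
    exists_eq_minRep_add_single_of_minimal hα hdeg hBgen hmval hmmin hdec hσ hmin
  have := degE_minRep_le hdeg hmval hr
    (mem_BA_of_minRep_of_xOnly hα hdeg hBgen hmval hmmin hμ hμstd)
  rw [hμstd] at this
  rw [degE_add, degE_single]
  omega

lemma exists_le_not_minRep_degE_le (hα : 0 < α) (hdeg : ∀ i, ∑ j, a i j = α)
    (hBgen : B = AddSubmonoid.closure (Set.range a ∪ Set.range (eVec d α)))
    (hmval : ∀ b ∈ B, val (m b) = b)
    (hmmin : ∀ b ∈ B, ∀ σ, val σ = b → m b = σ ∨ grevlex (m b) σ) {r : ℕ}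
    (hr : IsGreatest {k | ∃ b ∈ BA B α, ∑ j, b j = α * k} r)
    (hdec : ClassIdealsUnitOrLinear B α) {σ : Fin (c + d) →₀ ℕ} (hσ : m (val σ) ≠ σ) :
    ∃ σ₀ ≤ σ, m (val σ₀) ≠ σ₀ ∧ degE σ₀ ≤ r + 1 := by
  induction σ using WellFoundedLT.induction with
  | _ σ ih =>
    by_cases hmin : ∀ τ < σ, m (val τ) = τ
    · exact ⟨σ, le_rfl, hσ,
        degE_le_of_minimal_not_minRep hα hdeg hBgen hmval hmmin hr hdec hσ hmin⟩
    · push Not at hmin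
      obtain ⟨τ, hτσ, hτ⟩ := hmin
      obtain ⟨σ₀, hσ₀τ, hσ₀⟩ := ih τ hτσ hτ
      exact ⟨σ₀, hσ₀τ.trans hτσ.le, hσ₀⟩

end MinimalNonstandard

section InitialIdeal

variable {c d α : ℕ} {a : Fin c → Fin d → ℕ} {B : AddSubmonoid (Fin d → ℕ)}
  {m : (Fin d → ℕ) → (Fin (c + d) →₀ ℕ)} {K : Type*} [Field K]
  {π : MvPolynomial (Fin (c + d)) K →ₐ[K] AddMonoidAlgebra K (Fin d → ℕ)}

local notation "val" => valE c d α a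

def valEHom (c d α : ℕ) (a : Fin c → Fin d → ℕ) : (Fin (c + d) →₀ ℕ) →+ (Fin d → ℕ) where
  toFun := valE c d α a
  map_zero' := by simp [valE]
  map_add' := valE_add

lemma eq_mapDomainAlgHom
    (hπ : ∀ v, π (MvPolynomial.X v) = AddMonoidAlgebra.of' K (Fin d → ℕ) (gens c d α a v)) :
    π = AddMonoidAlgebra.mapDomainAlgHom K K (valEHom c d α a) := by
  refine MvPolynomial.algHom_ext fun v => ?_
  rw [hπ]
  simp [MvPolynomial.X, valEHom, MvPolynomial.monomial, AddMonoidAlgebra.mapDomain_single, valE,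
    Finsupp.single_apply]

lemma map_monomial
    (hπ : ∀ v, π (MvPolynomial.X v) = AddMonoidAlgebra.of' K (Fin d → ℕ) (gens c d α a v))
    (σ : Fin (c + d) →₀ ℕ) (k : K) :
    π (MvPolynomial.monomial σ k) = AddMonoidAlgebra.single (val σ) k := by
  rw [eq_mapDomainAlgHom hπ]
  exact AddMonoidAlgebra.mapDomain_single

lemma exists_mem_support_valE_eq
    (hπ : ∀ v, π (MvPolynomial.X v) = AddMonoidAlgebra.of' K (Fin d → ℕ) (gens c d α a v))
    {f : MvPolynomial (Fin (c + d)) K} (hf : π f = 0) {σ : Fin (c + d) →₀ ℕ}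
    (hσ : σ ∈ f.support) : ∃ τ ∈ f.support, τ ≠ σ ∧ val τ = val σ := by
  classical
  by_contra! h
  have hcoeff := congrArg (fun g => AddMonoidAlgebra.coeff g (val σ)) hf
  rw [eq_mapDomainAlgHom hπ, AddMonoidAlgebra.mapDomainAlgHom_apply] at hcoeff
  change Finsupp.mapDomain (valE c d α a) (AddMonoidAlgebra.coeff f) (val σ) = 0 at hcoeff
  rw [Finsupp.mapDomain_apply_eq_sum, Finset.sum_eq_single_of_mem σ ?_ ?_] at hcoeff
  · exact MvPolynomial.mem_support_iff.mp hσ hcoeff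
  · exact Finset.mem_filter.mpr ⟨hσ, rfl⟩
  · intro τ hτ hτσ
    exact absurd (Finset.mem_filter.mp hτ).2 (h τ (Finset.mem_filter.mp hτ).1 hτσ)

lemma not_minRep_of_isLeadMon
    (hBgen : B = AddSubmonoid.closure (Set.range a ∪ Set.range (eVec d α)))
    (hmmin : ∀ b ∈ B, ∀ σ, val σ = b → m b = σ ∨ grevlex (m b) σ)
    (hπ : ∀ v, π (MvPolynomial.X v) = AddMonoidAlgebra.of' K (Fin d → ℕ) (gens c d α a v))
    {f : MvPolynomial (Fin (c + d)) K} (hf : f ∈ RingHom.ker π.toRingHom)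
    {σ : Fin (c + d) →₀ ℕ} (hσ : IsLeadMon f σ) : m (val σ) ≠ σ := by
  intro hstd
  obtain ⟨τ, hτ, hτσ, hval⟩ := exists_mem_support_valE_eq hπ (RingHom.mem_ker.mp hf) hσ.1
  rcases hmmin _ (valE_mem hBgen σ) τ hval with h | h <;> rw [hstd] at h
  · exact hτσ h.symm
  · exact (hσ.2 τ hτ).elim hτσ (grevlex_asymm h)

lemma monomial_mem_initialIdeal
    (hBgen : B = AddSubmonoid.closure (Set.range a ∪ Set.range (eVec d α)))
    (hmval : ∀ b ∈ B, val (m b) = b)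
    (hmmin : ∀ b ∈ B, ∀ σ, val σ = b → m b = σ ∨ grevlex (m b) σ)
    (hπ : ∀ v, π (MvPolynomial.X v) = AddMonoidAlgebra.of' K (Fin d → ℕ) (gens c d α a v))
    {σ : Fin (c + d) →₀ ℕ} (hσ : m (val σ) ≠ σ) :
    MvPolynomial.monomial σ (1 : K) ∈ initialIdeal (RingHom.ker π.toRingHom) := by
  classical
  have hb := valE_mem hBgen σ
  refine Ideal.subset_span ⟨MvPolynomial.monomial σ 1 - MvPolynomial.monomial (m (val σ)) 1, ?_,
    σ, ⟨?_, fun τ hτ => ?_⟩, rfl⟩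
  · rw [RingHom.mem_ker]
    simp [map_monomial hπ, hmval _ hb]
  · simp [MvPolynomial.mem_support_iff, MvPolynomial.coeff_monomial, hσ]
  · rcases Finset.mem_union.mp (MvPolynomial.support_sub _ _ _ hτ) with hτ | hτ <;>
      rw [Finset.mem_singleton.mp (MvPolynomial.support_monomial_subset hτ)]
    · exact Or.inl rfl
    · exact Or.inr ((hmmin _ hb σ rfl).resolve_left hσ)

lemma initialIdeal_ker_eq_span (hα : 0 < α) (hdeg : ∀ i, ∑ j, a i j = α)
    (hBgen : B = AddSubmonoid.closure (Set.range a ∪ Set.range (eVec d α)))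
    (hmval : ∀ b ∈ B, val (m b) = b)
    (hmmin : ∀ b ∈ B, ∀ σ, val σ = b → m b = σ ∨ grevlex (m b) σ)
    (hπ : ∀ v, π (MvPolynomial.X v) = AddMonoidAlgebra.of' K (Fin d → ℕ) (gens c d α a v))
    {r : ℕ} (hr : IsGreatest {k | ∃ b ∈ BA B α, ∑ j, b j = α * k} r)
    (hdec : ClassIdealsUnitOrLinear B α) :
    initialIdeal (RingHom.ker π.toRingHom) = Ideal.span
      ((fun n => MvPolynomial.monomial n (1 : K)) '' {σ | degE σ ≤ r + 1 ∧ m (val σ) ≠ σ}) := by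
  refine le_antisymm (Ideal.span_le.mpr ?_) (Ideal.span_le.mpr ?_)
  · rintro _ ⟨f, hf, σ, hσ, rfl⟩
    obtain ⟨σ₀, hle, hσ₀, hdeg₀⟩ := exists_le_not_minRep_degE_le hα hdeg hBgen hmval hmmin hr hdec
      (not_minRep_of_isLeadMon hBgen hmmin hπ hf hσ)
    have hdvd : MvPolynomial.monomial σ (1 : K) =
        MvPolynomial.monomial (σ - σ₀) 1 * MvPolynomial.monomial σ₀ 1 := by
      rw [MvPolynomial.monomial_mul, one_mul, tsub_add_cancel_of_le hle]
    rw [SetLike.mem_coe, hdvd]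
    exact Ideal.mul_mem_left _ _ (Ideal.subset_span ⟨σ₀, ⟨hdeg₀, hσ₀⟩, rfl⟩)
  · rintro _ ⟨σ, ⟨-, hσ⟩, rfl⟩
    exact monomial_mem_initialIdeal hBgen hmval hmmin hπ hσ

end InitialIdeal

end SimplicialToric

theorem degree_bound_of_decomposition_general
    (c d α : ℕ) (hα : 0 < α)
    (a : Fin c → Fin d → ℕ) (B : AddSubmonoid (Fin d → ℕ))
    (hBgen : B = AddSubmonoid.closure (Set.range a ∪ Set.range (eVec d α)))
    (hdeg : ∀ i, ∑ j, a i j = α)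
    (m : (Fin d → ℕ) → (Fin (c + d) →₀ ℕ))
    (hmval : ∀ b ∈ B, valE c d α a (m b) = b)
    (hmmin : ∀ b ∈ B, ∀ σ, valE c d α a σ = b → m b = σ ∨ grevlex (m b) σ)
    (K : Type*) [Field K]
    (π : MvPolynomial (Fin (c + d)) K →ₐ[K] AddMonoidAlgebra K (Fin d → ℕ))
    (hπ : ∀ v, π (MvPolynomial.X v) = AddMonoidAlgebra.of' K (Fin d → ℕ) (gens c d α a v))
    (r : ℕ) (hr : IsGreatest {k | ∃ b ∈ BA B α, ∑ j, b j = α * k} r)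
    (hdec : ∀ Γ, IsClass B α Γ → ∀ h : Fin d → ℕ,
      (∀ j, IsLeast {v | ∃ b ∈ Γ, v = b j} (h j)) →
      (h ∈ Γ ∨ ∀ b ∈ Γ, ∃ k : Fin d, b = fun j => h j + eVec d α k j)) :
    (∀ n ∈ N1set c d α a B m ∪ N2set c α B m, degE n ≤ r + 1) ∧
    ∃ Ns : Set (Fin (c + d) →₀ ℕ), (∀ n ∈ Ns, degE n ≤ r + 1) ∧
      initialIdeal (RingHom.ker π.toRingHom)
        = Ideal.span ((fun n => MvPolynomial.monomial n (1 : K)) '' Ns) := by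
  refine ⟨fun n hn => ?_, _, fun _ hσ => hσ.1,
    initialIdeal_ker_eq_span hα hdeg hBgen hmval hmmin hπ hr hdec⟩
  rcases hn with hn | hn
  · exact degE_le_of_mem_N1set hdeg hmval hr hn
  · exact degE_le_of_mem_N2set hα hdeg hBgen hmval hr hdec hn

/-- If each ideal in the decomposition of `K[B]` is the unit ideal
or is generated in degree 1, then all monomials of `N₁ ∪ N₂` have degree at most
`r(K[B]) + 1`; in particular `in_≺(ker π)` is generated in degrees `≤ r(K[B]) + 1`. -/
theorem degree_bound_of_decomposition
    (c d α : ℕ) (hα : 0 < α)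
    (a : Fin c → Fin d → ℕ) (B : AddSubmonoid (Fin d → ℕ))
    (hBgen : B = AddSubmonoid.closure (Set.range a ∪ Set.range (eVec d α)))
    (hhilb : Hilb B = Set.range a ∪ Set.range (eVec d α))
    (hdeg : ∀ i, ∑ j, a i j = α)
    (m : (Fin d → ℕ) → (Fin (c + d) →₀ ℕ))
    (hmval : ∀ b ∈ B, valE c d α a (m b) = b)
    (hmmin : ∀ b ∈ B, ∀ σ, valE c d α a σ = b → m b = σ ∨ grevlex (m b) σ)
    (K : Type*) [Field K]
    (π : MvPolynomial (Fin (c + d)) K →ₐ[K] AddMonoidAlgebra K (Fin d → ℕ))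
    (hπ : ∀ v, π (MvPolynomial.X v) = AddMonoidAlgebra.of' K (Fin d → ℕ) (gens c d α a v))
    (r : ℕ) (hr : IsGreatest {k | ∃ b ∈ BA B α, ∑ j, b j = α * k} r)
    (hdec : ∀ Γ, IsClass B α Γ → ∀ h : Fin d → ℕ,
      (∀ j, IsLeast {v | ∃ b ∈ Γ, v = b j} (h j)) →
      (h ∈ Γ ∨ ∀ b ∈ Γ, ∃ k : Fin d, b = fun j => h j + eVec d α k j)) :
    (∀ n ∈ N1set c d α a B m ∪ N2set c α B m, degE n ≤ r + 1) ∧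
    ∃ Ns : Set (Fin (c + d) →₀ ℕ), (∀ n ∈ Ns, degE n ≤ r + 1) ∧
      initialIdeal (RingHom.ker π.toRingHom)
        = Ideal.span ((fun n => MvPolynomial.monomial n (1 : K)) '' Ns) :=
  degree_bound_of_decomposition_general c d α hα a B hBgen hdeg m hmval hmmin K π hπ r hr hdec
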